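/- For every r ∈ (0,1) there exists a constant C₅(r) such that for every α ∈ 𝔹 the set Δ(α,r) can be covered by at most C₅(r)·d⁻⁴ pseudohyperbolic balls B(α_j, 4r) whose centers α_j all belong to the sphere [α] = {Re(α) + J|Im(α)| : J ∈ 𝕊} of points with the same real part and the same modulus as α, where d = (1 − |α|²)^{1/2}. -/

import Mathlib

open MeasureTheory Filter Set
open scoped ENNReal

noncomputable section

notation "ℍ" => Quaternion ℝ

instance : MeasurableSpace ℍ := borel ℍ
instance : BorelSpace ℍ := ⟨rfl⟩

/-- The 2-sphere `𝕊` of imaginary units of `ℍ`. -/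
def Sph : Set ℍ := {q | q ^ 2 = -1}

/-- The point `x + I y` of the slice `ℂ_I`, for `z = (x, y)`. -/
def toSlice (I : ℍ) (z : ℝ × ℝ) : ℍ := (z.1 : ℍ) + z.2 • I

/-- The slice (complex plane) `ℂ_I = {x + I y : x, y ∈ ℝ}`. -/
def CPlane (I : ℍ) : Set ℍ := Set.range (toSlice I)

/-- `f` is (left) slice regular on the open set `U ⊆ ℍ`: it is real differentiable on `U`
and for every imaginary unit `I` its restriction to `U ∩ ℂ_I` satisfies
`(∂/∂x + I ∂/∂y) f(x + I y) = 0`. -/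
def SliceRegularOn (f : ℍ → ℍ) (U : Set ℍ) : Prop :=
  (∀ q ∈ U, DifferentiableAt ℝ f q) ∧
  ∀ I ∈ Sph, ∀ q ∈ U ∩ CPlane I, fderiv ℝ f q 1 + I * fderiv ℝ f q I = 0

/-- `f` is holomorphic on the slice `U ∩ ℂ_J`: it is real differentiable there (as a function of
the slice coordinates `(x,y)`) and satisfies `(∂/∂x + J ∂/∂y) f(x + J y) = 0`. -/
def HolOnSlice (f : ℍ → ℍ) (J : ℍ) (U : Set ℍ) : Prop :=
  ∀ z : ℝ × ℝ, toSlice J z ∈ U →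
    DifferentiableAt ℝ (fun w => f (toSlice J w)) z ∧
    fderiv ℝ (fun w => f (toSlice J w)) z (1, 0)
      + J * fderiv ℝ (fun w => f (toSlice J w)) z (0, 1) = 0

/-- Axially symmetric subset of `ℍ`. -/
def AxSymm (U : Set ℍ) : Prop :=
  ∀ x y : ℝ, ∀ I ∈ Sph, (x : ℍ) + y • I ∈ U → ∀ J ∈ Sph, (x : ℍ) + y • J ∈ U

/-- s-domain: a domain whose intersection with every slice `ℂ_I` is connected. -/
def IsSDomain (U : Set ℍ) : Prop :=
  IsOpen U ∧ IsConnected U ∧ ∀ I ∈ Sph, IsConnected (U ∩ CPlane I)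

/-- The open unit ball `𝔹` of `ℍ`. -/
def B1 : Set ℍ := Metric.ball 0 1

/-- The point `r e^{Iθ} = r cos θ + (r sin θ) I`. -/
def circleQ (I : ℍ) (r θ : ℝ) : ℍ := ((r * Real.cos θ : ℝ) : ℍ) + (r * Real.sin θ) • I

/-- `∫_0^{2π} |f(r e^{Iθ})|^p dθ`. -/
def circIntP (f : ℍ → ℍ) (p : ℝ) (I : ℍ) (r : ℝ) : ℝ :=
  ∫ θ in (0:ℝ)..(2 * Real.pi), ‖f (circleQ I r θ)‖ ^ p

/-- Membership in the Hardy space `H^p(𝔹)`: `f` is slice regular on `𝔹` and the limits as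
`r → 1⁻` of `∫_0^{2π} |f(r e^{Iθ})|^p dθ` exist and are uniformly bounded over `I ∈ 𝕊`. -/
def HardyMem (f : ℍ → ℍ) (p : ℝ) : Prop :=
  SliceRegularOn f B1 ∧ ∃ M : ℝ, ∀ I ∈ Sph, ∃ L : ℝ, L ≤ M ∧
    Tendsto (fun r => circIntP f p I r) (nhdsWithin 1 (Set.Iio 1)) (nhds L)

/-- `∥f∥_p^p = sup_{I ∈ 𝕊} lim_{r→1⁻} ∫_0^{2π} |f(r e^{Iθ})|^p dθ`. -/
def hardyNormP (f : ℍ → ℍ) (p : ℝ) : ℝ :=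
  sSup {L | ∃ I ∈ Sph, Tendsto (fun r => circIntP f p I r) (nhdsWithin 1 (Set.Iio 1)) (nhds L)}

/-- `μ` is a Carleson measure for `H^p(𝔹)`. -/
def IsCarlesonHardy (μ : Measure ℍ) (p : ℝ) : Prop :=
  ∃ C : ℝ, 0 < C ∧ ∀ f : ℍ → ℍ, HardyMem f p →
    ∫⁻ q in B1, ENNReal.ofReal (‖f q‖ ^ p) ∂μ ≤ ENNReal.ofReal (C * hardyNormP f p)

/-- `μ` is a slice Carleson measure for `H^p(𝔹)`: for every `I ∈ 𝕊`, the restriction `μ_I`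
of `μ` to `𝔹_I = 𝔹 ∩ ℂ_I` satisfies the Carleson inequality. -/
def IsSliceCarlesonHardy (μ : Measure ℍ) (p : ℝ) : Prop :=
  ∃ C : ℝ, 0 < C ∧ ∀ I ∈ Sph, ∀ f : ℍ → ℍ, HardyMem f p →
    ∫⁻ q in B1 ∩ CPlane I, ENNReal.ofReal (‖f q‖ ^ p) ∂μ ≤ ENNReal.ofReal (C * hardyNormP f p)

/-- The Carleson box `S_I(θ₀, r) ⊆ 𝔹_I`. -/
def carlesonBox (I : ℍ) (θ₀ r : ℝ) : Set ℍ :=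
  {q | ∃ ρ θ : ℝ, r ≤ ρ ∧ ρ < 1 ∧ |θ - θ₀| ≤ 1 - r ∧ q = circleQ I ρ θ}

/-- The symmetric box `S(θ₀, r) = ⋃_{I ∈ 𝕊} S_I(θ₀, r)`. -/
def symmBox (θ₀ r : ℝ) : Set ℍ := ⋃ I ∈ Sph, carlesonBox I θ₀ r

/-- The open unit disc of `ℝ²` (parametrizing `𝔹_I`). -/
def unitDisc2 : Set (ℝ × ℝ) := {z | z.1 ^ 2 + z.2 ^ 2 < 1}

/-- `∫_{𝔹_I} |f|^p dλ`, `λ` the 2-dimensional Lebesgue measure on `ℂ_I`. -/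
def sliceIntP (f : ℍ → ℍ) (p : ℝ) (I : ℍ) : ℝ≥0∞ :=
  ∫⁻ z in unitDisc2, ENNReal.ofReal (‖f (toSlice I z)‖ ^ p)

/-- `∥f∥_{𝒜^p}^p = sup_{I ∈ 𝕊} ∫_{𝔹_I} |f|^p dλ`. -/
def bergNormP (f : ℍ → ℍ) (p : ℝ) : ℝ≥0∞ := ⨆ I ∈ Sph, sliceIntP f p I

/-- Membership in the Bergman space `𝒜^p(𝔹)`. -/
def BergMem (f : ℍ → ℍ) (p : ℝ) : Prop := SliceRegularOn f B1 ∧ bergNormP f p < ⊤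

/-- `μ` is a Carleson measure for `𝒜^p(𝔹)`. -/
def IsCarlesonBerg (μ : Measure ℍ) (p : ℝ) : Prop :=
  ∃ C : ℝ, 0 < C ∧ ∀ f : ℍ → ℍ, BergMem f p →
    ∫⁻ q in B1, ENNReal.ofReal (‖f q‖ ^ p) ∂μ ≤ ENNReal.ofReal C * bergNormP f p

/-- `μ` is a slice Carleson measure for `𝒜^p(𝔹)`. -/
def IsSliceCarlesonBerg (μ : Measure ℍ) (p : ℝ) : Prop :=
  ∃ C : ℝ, 0 < C ∧ ∀ I ∈ Sph, ∀ f : ℍ → ℍ, BergMem f p →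
    ∫⁻ q in B1 ∩ CPlane I, ENNReal.ofReal (‖f q‖ ^ p) ∂μ ≤ ENNReal.ofReal C * bergNormP f p

/-- The pseudohyperbolic distance
`ρ(q,α) = |(1 − 2Re(α)q + |α|²q²)⁻¹ (−α + q(1+α²) − q²α)| = |(1 − qᾱ)^{−*} * (q − α)|`. -/
def pRho (q α : ℍ) : ℝ :=
  ‖(1 - (2 * α.re) • q + (‖α‖ ^ 2) • q ^ 2)⁻¹ * (-α + q * (1 + α ^ 2) - q ^ 2 * α)‖

/-- The pseudohyperbolic ball `B(α, r)`. -/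
def pBall (α : ℍ) (r : ℝ) : Set ℍ := {q ∈ B1 | pRho q α < r}

/-- The pseudohyperbolic disc `Δ_I(α,r) = {z ∈ 𝔹_I : |z − α| < r |1 − zᾱ|}`. -/
def pDisc (I : ℍ) (α : ℍ) (r : ℝ) : Set ℍ :=
  {z | z ∈ B1 ∧ z ∈ CPlane I ∧ ‖z - α‖ < r * ‖1 - z * star α‖}

/-- The axially symmetric completion of a set `S ⊆ ℍ`. -/
def axComp (S : Set ℍ) : Set ℍ := {q | ∃ s ∈ S, q.re = s.re ∧ ‖q.im‖ = ‖s.im‖}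

/-- The 2-dimensional Lebesgue area, on the slice `ℂ_I`, of a subset of `ℂ_I`. -/
def sliceArea (I : ℍ) (S : Set ℍ) : ℝ≥0∞ := volume (toSlice I ⁻¹' S)

/-- The 4-dimensional Lebesgue measure on `ℍ ≅ ℝ⁴`. -/
def quatVol : Measure ℍ :=
  Measure.map (fun p : ℝ × ℝ × ℝ × ℝ => (⟨p.1, p.2.1, p.2.2.1, p.2.2.2⟩ : ℍ)) volume

/-- The 4-dimensional Lebesgue measure `η`, normalized so that `η(𝔹) = 1`. -/
def etaMeasure : Measure ℍ := (quatVol B1)⁻¹ • quatVol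

/-- The 2-sphere `[α]` of points with the same real part and the same modulus as `α`. -/
def qSphere (α : ℍ) : Set ℍ := {q | ∃ J ∈ Sph, q = (α.re : ℍ) + ‖α.im‖ • J}

/-- The 2-dimensional Lebesgue measure of the slice `ℂ_i`, restricted to `𝔹`,
regarded as a Borel measure on `ℍ`. -/
def sliceLeb (i : ℍ) : Measure ℍ := (Measure.map (toSlice i) volume).restrict B1


/-! On a slice `ℂ_J`, the embedding `x + y i ↦ x + y J` carries the complex pseudohyperbolic
distance `|z - w| / |1 - z w̄|` to `ρ`. For `q ∈ ℂ_J` and fixed `x, y`, the map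
`L ↦ ρ(q, x + y L)²` on `𝕊` is affine in `Re(J L)`, so it interpolates between its values at
`L = ±J`: with `t = |J - K|² / 4`,
`ρ(q, x + y K)² = (1 - t) ρ(q, x + y J)² + t ρ(q, x - y J)² < r² + t`
whenever `ρ(q, x + y J) < r`. Hence, if `K` runs over a finite `r`-net of `𝕊`, the balls
`B(x + y K, 4r)` cover `Δ(x + y I, r)`; their number does not even depend on `α = x + y I`. -/

open ComplexConjugate

theorem mem_Sph_iff {J : ℍ} : J ∈ Sph ↔ J.re = 0 ∧ Quaternion.normSq J = 1 := by
  have hsq : J ^ 2 = -Quaternion.normSq J ↔ J.re = 0 := Quaternion.sq_eq_neg_normSq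
  constructor
  · intro h
    have h1 : Quaternion.normSq J = 1 := by
      have h' := congrArg norm (h : J ^ 2 = -1)
      rw [norm_pow, norm_neg, norm_one] at h'
      rw [Quaternion.normSq_eq_norm_mul_self, ← sq, h']
    exact ⟨hsq.1 (by rw [h1]; exact h), h1⟩
  · rintro ⟨h0, h1⟩
    show J ^ 2 = -1
    rw [hsq.2 h0, h1, Quaternion.coe_one]

theorem norm_eq_one_of_mem_Sph {J : ℍ} (hJ : J ∈ Sph) : ‖J‖ = 1 := by
  have h := (mem_Sph_iff.1 hJ).2
  rw [Quaternion.normSq_eq_norm_mul_self] at h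
  nlinarith [norm_nonneg J]

theorem neg_mem_Sph {J : ℍ} (hJ : J ∈ Sph) : -J ∈ Sph := by
  show (-J) ^ 2 = -1
  rw [neg_sq]
  exact hJ

theorem isCompact_Sph : IsCompact Sph := by
  refine Metric.isCompact_of_isClosed_isBounded
    (isClosed_singleton.preimage (continuous_pow 2)) ?_
  refine (Metric.isBounded_closedBall (x := (0 : ℍ)) (r := 1)).subset fun J hJ => ?_
  simp [norm_eq_one_of_mem_Sph hJ]

theorem exists_finset_Sph_cover {r : ℝ} (hr : 0 < r) :
    ∃ N : Finset Sph, ∀ J : Sph, ∃ K ∈ N, ‖(J : ℍ) - K‖ < r := by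
  have : CompactSpace Sph := isCompact_iff_compactSpace.1 isCompact_Sph
  obtain ⟨N, -, hN⟩ := isCompact_univ.elim_nhds_subcover (fun K : Sph => Metric.ball K r)
    fun K _ => Metric.ball_mem_nhds K hr
  refine ⟨N, fun J => ?_⟩
  obtain ⟨K, hK, hJK⟩ := Set.mem_iUnion₂.1 (hN (Set.mem_univ J))
  exact ⟨K, hK, by rwa [Metric.mem_ball, Subtype.dist_eq, dist_eq_norm] at hJK⟩

theorem norm_sub_sq_of_mem_Sph {J K : ℍ} (hJ : J ∈ Sph) (hK : K ∈ Sph) :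
    ‖J - K‖ ^ 2 = 2 + 2 * (J * K).re := by
  obtain ⟨hJ0, hJ1⟩ := mem_Sph_iff.1 hJ
  obtain ⟨hK0, hK1⟩ := mem_Sph_iff.1 hK
  rw [Quaternion.normSq_def', hJ0] at hJ1
  rw [Quaternion.normSq_def', hK0] at hK1
  rw [sq, ← Quaternion.normSq_eq_norm_mul_self, Quaternion.normSq_def']
  simp only [Quaternion.re_sub, Quaternion.imI_sub, Quaternion.imJ_sub, Quaternion.imK_sub,
    Quaternion.re_mul, hJ0, hK0]
  linear_combination hJ1 + hK1

/-- The slice `ℂ_J`, parametrized as the image of `ℂ` under `x + y i ↦ x + y J`. -/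
def sliceHom (J : Sph) : ℂ →ₐ[ℝ] ℍ :=
  Complex.liftAux (J : ℍ) (by rw [← sq]; exact J.2)

theorem sliceHom_apply (J : Sph) (z : ℂ) : sliceHom J z = (z.re : ℍ) + z.im • (J : ℍ) := rfl

theorem sliceHom_conj (J : Sph) (z : ℂ) :
    sliceHom J (conj z) = sliceHom ⟨-J, neg_mem_Sph J.2⟩ z := by
  simp [sliceHom_apply]

theorem re_sliceHom (J : Sph) (z : ℂ) : (sliceHom J z).re = z.re := by
  simp [sliceHom_apply, (mem_Sph_iff.1 J.2).1]

theorem im_sliceHom (J : Sph) (z : ℂ) : (sliceHom J z).im = z.im • (J : ℍ) := by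
  have h0 := (mem_Sph_iff.1 J.2).1
  ext <;> simp [sliceHom_apply, h0]

theorem star_sliceHom (J : Sph) (z : ℂ) : star (sliceHom J z) = sliceHom J (conj z) := by
  rw [sliceHom_apply, sliceHom_apply, star_add, Quaternion.star_coe, Quaternion.star_smul,
    Quaternion.star_eq_neg.2 (mem_Sph_iff.1 J.2).1]
  simp

theorem norm_sliceHom (J : Sph) (z : ℂ) : ‖sliceHom J z‖ = ‖z‖ := by
  have h : Quaternion.normSq (sliceHom J z) = Complex.normSq z := by
    have h' := congrArg (fun q : ℍ => q.re) (Quaternion.self_mul_star (sliceHom J z))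
    rw [star_sliceHom, ← map_mul, Complex.mul_conj, re_sliceHom] at h'
    simpa using h'.symm
  rw [Quaternion.normSq_eq_norm_mul_self, Complex.normSq_eq_norm_sq, sq] at h
  nlinarith [norm_nonneg (sliceHom J z), norm_nonneg z]

theorem norm_im_sliceHom (J : Sph) (z : ℂ) : ‖(sliceHom J z).im‖ = |z.im| := by
  rw [im_sliceHom, norm_smul, norm_eq_one_of_mem_Sph J.2, mul_one, Real.norm_eq_abs]

theorem exists_sliceHom_eq {q : ℍ} {z : ℂ} (hre : q.re = z.re) (him : ‖q.im‖ = |z.im|) :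
    ∃ J : Sph, q = sliceHom J z := by
  suffices h : ∃ J : Sph, q.im = z.im • (J : ℍ) by
    obtain ⟨J, hJ⟩ := h
    exact ⟨J, by rw [sliceHom_apply, ← hre, ← hJ, Quaternion.re_add_im]⟩
  rcases eq_or_ne z.im 0 with h0 | h0
  · refine ⟨⟨Quaternion.ofComplex Complex.I, show _ ^ 2 = _ by
      rw [← map_pow, Complex.I_sq, map_neg, map_one]⟩, ?_⟩
    rwa [h0, zero_smul, ← norm_eq_zero, him, abs_eq_zero]
  · refine ⟨⟨z.im⁻¹ • q.im, mem_Sph_iff.2 ⟨by simp, ?_⟩⟩,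
      by rw [smul_smul, mul_inv_cancel₀ h0, one_smul]⟩
    rw [Quaternion.normSq_eq_norm_mul_self, norm_smul, mul_mul_mul_comm, him, Real.norm_eq_abs,
      abs_inv, ← mul_inv, inv_mul_cancel₀ (by simpa using h0)]

theorem sliceHom_mem_qSphere (I K : Sph) (w : ℂ) : sliceHom K w ∈ qSphere (sliceHom I w) := by
  rcases abs_choice w.im with h | h
  · exact ⟨K, K.2, by rw [re_sliceHom, norm_im_sliceHom, h, sliceHom_apply]⟩
  · exact ⟨-K, neg_mem_Sph K.2, by
      rw [re_sliceHom, norm_im_sliceHom, h, sliceHom_apply, neg_smul_neg]⟩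

theorem axComp_mono {S T : Set ℍ} (h : S ⊆ T) : axComp S ⊆ axComp T :=
  fun _ ⟨s, hs, hre, him⟩ => ⟨s, h hs, hre, him⟩

theorem axComp_image_sliceHom_subset (I : Sph) (S : Set ℂ) :
    axComp (sliceHom I '' S) ⊆ ⋃ J : Sph, sliceHom J '' S := by
  rintro q ⟨_, ⟨z, hz, rfl⟩, hre, him⟩
  rw [re_sliceHom] at hre
  rw [norm_im_sliceHom] at him
  obtain ⟨J, rfl⟩ := exists_sliceHom_eq hre him
  exact Set.mem_iUnion.2 ⟨J, z, hz, rfl⟩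

/-- The disc of `ℂ` that `sliceHom I` carries onto `Δ_I(sliceHom I w, r)`. -/
def complexPDisc (w : ℂ) (r : ℝ) : Set ℂ := {z | ‖z‖ < 1 ∧ ‖z - w‖ < r * ‖1 - z * conj w‖}

theorem pDisc_subset_image_sliceHom (I : Sph) (w : ℂ) (r : ℝ) :
    pDisc I (sliceHom I w) r ⊆ sliceHom I '' complexPDisc w r := by
  rintro _ ⟨hB, ⟨p, rfl⟩, hlt⟩
  have hp : toSlice I p = sliceHom I ⟨p.1, p.2⟩ := rfl
  rw [hp] at hB hlt ⊢
  refine ⟨_, ⟨?_, ?_⟩, rfl⟩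
  · rwa [B1, Metric.mem_ball, dist_zero_right, norm_sliceHom] at hB
  · rwa [star_sliceHom, ← map_sub, ← map_mul, ← map_one (sliceHom I), ← map_sub, norm_sliceHom,
      norm_sliceHom] at hlt

theorem Complex.norm_sub_lt_norm_one_sub_mul_conj {z w : ℂ} (hz : ‖z‖ < 1) (hw : ‖w‖ < 1) :
    ‖z - w‖ < ‖1 - z * conj w‖ := by
  have key : ‖1 - z * conj w‖ ^ 2 - ‖z - w‖ ^ 2 = (1 - ‖z‖ ^ 2) * (1 - ‖w‖ ^ 2) := by
    simp only [Complex.sq_norm, Complex.normSq_apply]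
    simp
    ring
  have hpos : 0 < (1 - ‖z‖ ^ 2) * (1 - ‖w‖ ^ 2) := by
    apply mul_pos <;> nlinarith [norm_nonneg z, norm_nonneg w]
  exact lt_of_pow_lt_pow_left₀ 2 (norm_nonneg _) (by linarith)

theorem pRho_eq_div (q β : ℍ) : pRho q β =
    ‖-β + q * (1 + β ^ 2) - q ^ 2 * β‖ / ‖1 - (2 * β.re) • q + (‖β‖ ^ 2) • q ^ 2‖ := by
  rw [pRho, norm_mul, norm_inv, inv_mul_eq_div]

theorem pRho_sliceHom (J : Sph) {z w : ℂ} (hzw : z * w ≠ 1) :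
    pRho (sliceHom J z) (sliceHom J w) = ‖z - w‖ / ‖1 - z * conj w‖ := by
  set φ := sliceHom J
  have hmap : (1 - (2 * (φ w).re) • φ z + (‖φ w‖ ^ 2) • φ z ^ 2)⁻¹
        * (-φ w + φ z * (1 + φ w ^ 2) - φ z ^ 2 * φ w)
      = φ ((1 - (2 * w.re) • z + (‖w‖ ^ 2) • z ^ 2)⁻¹ * (-w + z * (1 + w ^ 2) - z ^ 2 * w)) := by
    simp only [φ, re_sliceHom, norm_sliceHom, map_mul, map_inv₀, map_sub, map_add, map_neg,
      map_one, map_pow, map_smul]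
  have hden : 1 - (2 * w.re) • z + (‖w‖ ^ 2) • z ^ 2 = (1 - z * conj w) * (1 - z * w) := by
    have h2 : ((‖w‖ ^ 2 : ℝ) : ℂ) = w * conj w := by
      rw [Complex.mul_conj, Complex.normSq_eq_norm_sq]
    rw [Complex.real_smul, Complex.real_smul, h2, Complex.ofReal_mul, Complex.re_eq_add_conj]
    push_cast
    ring
  have hz : 1 - z * w ≠ 0 := sub_ne_zero.2 (Ne.symm hzw)
  rw [pRho, hmap, norm_sliceHom, hden, mul_inv, ← norm_div]
  congr 1
  field_simp
  ring

theorem norm_sliceHom_add_sliceHom_mul_sq (J L : Sph) (a b : ℂ) :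
    ‖sliceHom J a + sliceHom J b * L‖ ^ 2
      = ‖a‖ ^ 2 + ‖b‖ ^ 2 - 2 * ((J : ℍ) * L).re * (conj b * a).im := by
  obtain ⟨hJ0, hJ1⟩ := mem_Sph_iff.1 J.2
  obtain ⟨hL0, hL1⟩ := mem_Sph_iff.1 L.2
  rw [Quaternion.normSq_def', hJ0] at hJ1
  rw [Quaternion.normSq_def', hL0] at hL1
  rw [sq, ← Quaternion.normSq_eq_norm_mul_self, Complex.sq_norm, Complex.sq_norm,
    Quaternion.normSq_def', Complex.normSq_apply, Complex.normSq_apply, sliceHom_apply,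
    sliceHom_apply]
  simp only [Quaternion.re_add, Quaternion.imI_add, Quaternion.imJ_add, Quaternion.imK_add,
    Quaternion.re_mul, Quaternion.imI_mul, Quaternion.imJ_mul, Quaternion.imK_mul,
    Quaternion.re_coe, Quaternion.imI_coe, Quaternion.imJ_coe, Quaternion.imK_coe,
    Quaternion.re_smul, Quaternion.imI_smul, Quaternion.imJ_smul, Quaternion.imK_smul,
    smul_eq_mul, Complex.mul_im, Complex.conj_re, Complex.conj_im, hJ0, hL0]
  linear_combination
    (a.im ^ 2 + b.im ^ 2 * ((L : ℍ).imI ^ 2 + (L : ℍ).imJ ^ 2 + (L : ℍ).imK ^ 2)) * hJ1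
      + (b.re ^ 2 + b.im ^ 2) * hL1

theorem exists_pRho_sliceHom_sq_eq_affine (J : Sph) (z w : ℂ) :
    ∃ s c : ℝ, ∀ L : Sph, pRho (sliceHom J z) (sliceHom L w) ^ 2 = s + c * ((J : ℍ) * L).re := by
  -- the numerator of `ρ` is `sliceHom J A + sliceHom J B * L`; the denominator is free of `L`
  set A : ℂ := (1 + (w ^ 2).re) • z - w.re • z ^ 2 - w.re • 1
  set B : ℂ := (w ^ 2).im • z - w.im • z ^ 2 - w.im • 1
  have hnum : ∀ L : Sph, -sliceHom L w + sliceHom J z * (1 + sliceHom L w ^ 2)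
      - sliceHom J z ^ 2 * sliceHom L w = sliceHom J A + sliceHom J B * L := by
    intro L
    rw [← map_pow, sliceHom_apply L, sliceHom_apply L]
    simp only [A, B, map_sub, map_smul, map_one, map_pow]
    generalize sliceHom J z = q
    ext <;>
      simp [Quaternion.re_one, Quaternion.imI_one, Quaternion.imJ_one, Quaternion.imK_one] <;>
      ring
  set d := ‖1 - (2 * w.re) • sliceHom J z + (‖w‖ ^ 2) • sliceHom J z ^ 2‖ ^ 2
  refine ⟨(‖A‖ ^ 2 + ‖B‖ ^ 2) / d, -2 * (conj B * A).im / d, fun L => ?_⟩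
  rw [pRho_eq_div, re_sliceHom, norm_sliceHom, hnum, div_pow,
    norm_sliceHom_add_sliceHom_mul_sq]
  ring

theorem pRho_sliceHom_sq_eq_convex (J K : Sph) (z w : ℂ) :
    pRho (sliceHom J z) (sliceHom K w) ^ 2
      = (1 - ((J : ℍ) * K).re) / 2 * pRho (sliceHom J z) (sliceHom J w) ^ 2
        + (1 + ((J : ℍ) * K).re) / 2 * pRho (sliceHom J z) (sliceHom J (conj w)) ^ 2 := by
  obtain ⟨s, c, h⟩ := exists_pRho_sliceHom_sq_eq_affine J z w
  have hJJ : ((J : ℍ) * J).re = -1 := by rw [← sq, J.2]; rfl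
  rw [sliceHom_conj, h, h, h, mul_neg, Quaternion.re_neg, hJJ]
  ring

theorem pRho_sliceHom_lt (J K : Sph) {z w : ℂ} (hz : ‖z‖ < 1) (hw : ‖w‖ < 1) {r : ℝ}
    (hzw : ‖z - w‖ < r * ‖1 - z * conj w‖) (hJK : ‖(J : ℍ) - K‖ < r) :
    pRho (sliceHom J z) (sliceHom K w) < 2 * r := by
  have hprod : ∀ {w' : ℂ}, ‖w'‖ < 1 → z * w' ≠ 1 := fun {w'} hw' h => by
    have := congrArg norm h
    rw [norm_mul, norm_one] at this
    nlinarith [norm_nonneg z, norm_nonneg w']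
  have hw' : ‖conj w‖ < 1 := by rwa [Complex.norm_conj]
  have hρ : pRho (sliceHom J z) (sliceHom J w) < r := by
    rw [pRho_sliceHom J (hprod hw)]
    exact (div_lt_iff₀ ((norm_nonneg _).trans_lt
      (Complex.norm_sub_lt_norm_one_sub_mul_conj hz hw))).2 hzw
  have hρ' : pRho (sliceHom J z) (sliceHom J (conj w)) < 1 := by
    rw [pRho_sliceHom J (hprod hw'), div_lt_one ((norm_nonneg _).trans_lt
      (Complex.norm_sub_lt_norm_one_sub_mul_conj hz hw'))]
    exact Complex.norm_sub_lt_norm_one_sub_mul_conj hz hw'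
  have hρ0 : 0 ≤ pRho (sliceHom J z) (sliceHom J w) := norm_nonneg _
  have hρ0' : 0 ≤ pRho (sliceHom J z) (sliceHom J (conj w)) := norm_nonneg _
  have hJK' : ‖(J : ℍ) - K‖ ^ 2 < r ^ 2 := pow_lt_pow_left₀ hJK (norm_nonneg _) two_ne_zero
  have he := norm_sub_sq_of_mem_Sph J.2 K.2
  have he' := norm_sub_sq_of_mem_Sph J.2 (neg_mem_Sph K.2)
  rw [mul_neg, Quaternion.re_neg] at he'
  refine lt_of_pow_lt_pow_left₀ 2 (by linarith [(norm_nonneg _).trans_lt hJK]) ?_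
  have hb : 0 ≤ (1 + ((J : ℍ) * K).re) / 2 := by nlinarith [sq_nonneg ‖(J : ℍ) - K‖]
  have hx : pRho (sliceHom J z) (sliceHom J w) ^ 2 < r ^ 2 :=
    pow_lt_pow_left₀ hρ hρ0 two_ne_zero
  have hy : pRho (sliceHom J z) (sliceHom J (conj w)) ^ 2 ≤ 1 := by nlinarith
  -- `ρ(q, x + y K)² ≤ ρ(q, x + y J)² + t` with `t = ‖J - K‖² / 4 < r² / 4`
  rw [pRho_sliceHom_sq_eq_convex]
  nlinarith [mul_le_mul_of_nonneg_left hy hb,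
    mul_nonneg hb (sq_nonneg (pRho (sliceHom J z) (sliceHom J w)))]

/-- For every `r ∈ (0,1)` there is a constant `C₅(r)` such that `Δ(α,r)` can be covered by at
most `C₅(r) d⁻⁴` pseudohyperbolic balls `B(α_j, 4r)` with centers `α_j` in the sphere `[α]`,
where `d = (1−|α|²)^{1/2}` (the cardinality bound `card ≤ C₅ d⁻⁴` is written
`card · d⁴ ≤ C₅`). -/
theorem pDisc_completion_covering (r : ℝ) (hr : r ∈ Set.Ioo (0 : ℝ) 1) :
    ∃ C₅ : ℝ, 0 < C₅ ∧ ∀ I ∈ Sph, ∀ α ∈ B1 ∩ CPlane I,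
      ∃ T : Finset ℍ, (↑T : Set ℍ) ⊆ qSphere α ∧
        (T.card : ℝ) * (1 - ‖α‖ ^ 2) ^ 2 ≤ C₅ ∧
        axComp (pDisc I α r) ⊆ ⋃ β ∈ T, pBall β (4 * r) := by
  classical
  obtain ⟨N, hN⟩ := exists_finset_Sph_cover hr.1
  refine ⟨N.card + 1, by positivity, fun I hI _ ⟨hαB, p, hp⟩ => ?_⟩
  set w : ℂ := ⟨p.1, p.2⟩
  obtain rfl : sliceHom ⟨I, hI⟩ w = _ := hp
  have hw : ‖w‖ < 1 := by rwa [B1, Metric.mem_ball, dist_zero_right, norm_sliceHom] at hαB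
  refine ⟨N.image fun K => sliceHom K w, ?_, ?_, ?_⟩
  · rintro _ hβ
    obtain ⟨K, -, rfl⟩ := Finset.mem_image.1 hβ
    exact sliceHom_mem_qSphere _ K w
  · have hcard : ((N.image fun K => sliceHom K w).card : ℝ) ≤ N.card := by
      exact_mod_cast Finset.card_image_le
    have hd : (1 - ‖w‖ ^ 2) ^ 2 ≤ 1 :=
      pow_le_one₀ (by nlinarith [norm_nonneg w]) (by linarith [sq_nonneg ‖w‖])
    rw [norm_sliceHom]
    calc _ ≤ ((N.image fun K => sliceHom K w).card : ℝ) * 1 := by gcongr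
      _ ≤ N.card + 1 := by linarith
  · intro q hq
    obtain ⟨J, z, ⟨hz, hzw⟩, rfl⟩ := Set.mem_iUnion.1 <|
      axComp_image_sliceHom_subset _ _ (axComp_mono (pDisc_subset_image_sliceHom ⟨I, hI⟩ w r) hq)
    obtain ⟨K, hK, hJK⟩ := hN J
    refine Set.mem_biUnion (Finset.mem_image_of_mem _ hK) ⟨?_, ?_⟩
    · rwa [B1, Metric.mem_ball, dist_zero_right, norm_sliceHom]
    · linarith [pRho_sliceHom_lt J K hz hw hzw hJK, hr.1]

end
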